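/- For all integers n ≥ 0 and k ≥ 0, the difference ΔP_{n,k} := P(max(1, M_{n+1}) − S_{n+1} ≤ k) − P(max(1, M_n) − S_n ≤ k) satisfies ΔP_{n,k} = p·P(M_n = 0, S_n = −k) − q·P(M_n ≤ 1, S_n = 1−k). -/

import Mathlib

/-! Condition on the first step. Write `D_c = max c M_n - S_n`. Since `M_{n+1} = max 0 (±1 + M_n)`,
a first step `±1` turns `D_1` at time `n + 1` into `D_{1 ∓ 1}` at time `n`, so
`P(D_1 ≤ k)` at time `n + 1` equals `p P(D_0 ≤ k) + q P(D_2 ≤ k)`. Raising the floor from `c` to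
`c + 1` removes exactly the paths with `M_n ≤ c` and `S_n = c - k`, which yields both terms. -/

open Finset

/-- Probability weight of a single path of length `N`. -/
noncomputable def pathProb (p : ℝ) (N : ℕ) (x : Fin N → Bool) : ℝ :=
  p ^ (Finset.univ.filter (fun i => x i = true)).card *
    (1 - p) ^ (N - (Finset.univ.filter (fun i => x i = true)).card)

open Classical in
/-- Probability of an event `E` for the `N`-step Bernoulli walk. -/
noncomputable def walkProb (p : ℝ) (N : ℕ) (E : Set (Fin N → Bool)) : ℝ :=
  ∑ x : Fin N → Bool, if x ∈ E then pathProb p N x else 0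

/-- Partial sum `S_j` of the walk given by the path `x`. -/
def walkS (N : ℕ) (x : Fin N → Bool) (j : ℕ) : ℤ :=
  ∑ i ∈ Finset.univ.filter (fun i : Fin N => (i : ℕ) < j), (if x i then (1 : ℤ) else -1)

/-- Running maximum `M_N = max_{0 ≤ j ≤ N} S_j`. -/
def walkM (N : ℕ) (x : Fin N → Bool) : ℤ :=
  (Finset.range (N + 1)).sup' Finset.nonempty_range_add_one (fun j => walkS N x j)

/-- `U_n(p) = P(M_n ≤ 1)`. -/
noncomputable def U (n : ℕ) (p : ℝ) : ℝ :=
  walkProb p n {x | walkM n x ≤ 1}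

lemma pathProb_eq_prod (p : ℝ) (N : ℕ) (x : Fin N → Bool) :
    pathProb p N x = ∏ i, if x i then p else 1 - p := by
  classical
  rw [prod_ite, prod_const, prod_const, pathProb, filter_not,
    card_sdiff_of_subset (filter_subset _ _), card_univ, Fintype.card_fin]

lemma pathProb_cons (p : ℝ) (n : ℕ) (b : Bool) (y : Fin n → Bool) :
    pathProb p (n + 1) (Fin.cons b y) = (if b then p else 1 - p) * pathProb p n y := by
  simp only [pathProb_eq_prod, Fin.prod_univ_succ, Fin.cons_zero, Fin.cons_succ]

lemma walkProb_eq_sum_indicator (p : ℝ) (N : ℕ) (E : Set (Fin N → Bool)) :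
    walkProb p N E = ∑ x, E.indicator (pathProb p N) x :=
  rfl

lemma walkProb_union (p : ℝ) (N : ℕ) {A B : Set (Fin N → Bool)} (h : Disjoint A B) :
    walkProb p N (A ∪ B) = walkProb p N A + walkProb p N B := by
  simp only [walkProb_eq_sum_indicator, Set.indicator_union_of_disjoint h, sum_add_distrib]

lemma walkProb_succ (p : ℝ) (n : ℕ) (E : Set (Fin (n + 1) → Bool)) :
    walkProb p (n + 1) E =
      p * walkProb p n {y | Fin.cons true y ∈ E} +
        (1 - p) * walkProb p n {y | Fin.cons false y ∈ E} := by
  classical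
  simp only [walkProb_eq_sum_indicator, ← (Fin.consEquiv fun _ => Bool).sum_comp,
    Fintype.sum_prod_type, Fintype.sum_bool, mul_sum]
  simp [Fin.consEquiv, Set.indicator_apply, pathProb_cons]

lemma walkS_zero (N : ℕ) (x : Fin N → Bool) : walkS N x 0 = 0 := by
  simp [walkS]

lemma walkS_cons_succ (n : ℕ) (b : Bool) (y : Fin n → Bool) (j : ℕ) :
    walkS (n + 1) (Fin.cons b y) (j + 1) = (if b then 1 else -1) + walkS n y j := by
  simp only [walkS, sum_filter, Fin.sum_univ_succ]
  simp

lemma walkM_nonneg (N : ℕ) (x : Fin N → Bool) : 0 ≤ walkM N x :=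
  walkS_zero N x ▸ le_sup' (walkS N x) (mem_range.2 N.succ_pos)

lemma walkM_cons (n : ℕ) (b : Bool) (y : Fin n → Bool) :
    walkM (n + 1) (Fin.cons b y) = max 0 ((if b then 1 else -1) + walkM n y) := by
  rw [walkM, sup'_congr _ (range_add_one' (n + 1)) fun _ _ => rfl, sup'_insert (H := by simp),
    sup'_map, walkS_zero, walkM, add_sup']
  exact congrArg _ (sup'_congr _ rfl fun j _ => walkS_cons_succ n b y j)

lemma max_walkM_sub_walkS_cons (n : ℕ) (b : Bool) (y : Fin n → Bool) {c : ℤ} (hc : 0 ≤ c) :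
    max c (walkM (n + 1) (Fin.cons b y)) - walkS (n + 1) (Fin.cons b y) (n + 1) =
      max (c - if b then 1 else -1) (walkM n y) - walkS n y n := by
  rw [walkM_cons, walkS_cons_succ]
  split <;> omega

lemma walkProb_succ_max_walkM_sub_walkS_le (p : ℝ) (n : ℕ) {c : ℤ} (hc : 0 ≤ c) (k : ℤ) :
    walkProb p (n + 1) {x | max c (walkM (n + 1) x) - walkS (n + 1) x (n + 1) ≤ k} =
      p * walkProb p n {y | max (c - 1) (walkM n y) - walkS n y n ≤ k} +
        (1 - p) * walkProb p n {y | max (c + 1) (walkM n y) - walkS n y n ≤ k} := by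
  simp only [walkProb_succ, Set.mem_ofPred_eq, max_walkM_sub_walkS_cons _ _ _ hc]
  norm_num

lemma walkProb_max_sub_le_eq_add (p : ℝ) (n : ℕ) (M S : (Fin n → Bool) → ℤ) (c k : ℤ) :
    walkProb p n {y | max c (M y) - S y ≤ k} =
      walkProb p n {y | max (c + 1) (M y) - S y ≤ k} +
        walkProb p n {y | M y ≤ c ∧ S y = c - k} := by
  rw [← walkProb_union]
  · congr 1
    ext y
    simp only [Set.mem_union, Set.mem_ofPred_eq]
    omega
  · exact Set.disjoint_left.2 fun y h₁ h₂ => by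
      simp only [Set.mem_ofPred_eq] at h₁ h₂
      omega

theorem deltaP_formula_general (p : ℝ) (n k : ℕ) :
    walkProb p (n + 1) {x | max 1 (walkM (n + 1) x) - walkS (n + 1) x (n + 1) ≤ (k : ℤ)} -
      walkProb p n {x | max 1 (walkM n x) - walkS n x n ≤ (k : ℤ)} =
    p * walkProb p n {x | walkM n x = 0 ∧ walkS n x n = -(k : ℤ)} -
      (1 - p) * walkProb p n {x | walkM n x ≤ 1 ∧ walkS n x n = 1 - (k : ℤ)} := by
  have first_step := walkProb_succ_max_walkM_sub_walkS_le p n zero_le_one (k : ℤ)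
  have floor_zero := walkProb_max_sub_le_eq_add p n (walkM n) (walkS n · n) 0 k
  have floor_one := walkProb_max_sub_le_eq_add p n (walkM n) (walkS n · n) 1 k
  have walkM_nonpos_event : {y | walkM n y ≤ 0 ∧ walkS n y n = 0 - k} =
      {y | walkM n y = 0 ∧ walkS n y n = -k} := by
    ext y
    have := walkM_nonneg n y
    simp only [Set.mem_ofPred_eq]
    omega
  norm_num only [walkM_nonpos_event] at first_step floor_zero floor_one
  rw [first_step, floor_zero, floor_one]
  ring

/-- `ΔP_{n,k} = p·P(M_n = 0, S_n = −k) − q·P(M_n ≤ 1, S_n = 1−k)`. -/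
theorem deltaP_formula (p : ℝ) (hp : p ∈ Set.Ioo (0 : ℝ) 1) (n k : ℕ) :
    walkProb p (n + 1) {x | max 1 (walkM (n + 1) x) - walkS (n + 1) x (n + 1) ≤ (k : ℤ)} -
      walkProb p n {x | max 1 (walkM n x) - walkS n x n ≤ (k : ℤ)} =
    p * walkProb p n {x | walkM n x = 0 ∧ walkS n x n = -(k : ℤ)} -
      (1 - p) * walkProb p n {x | walkM n x ≤ 1 ∧ walkS n x n = 1 - (k : ℤ)} :=
  deltaP_formula_general p n k
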